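/- Let d ≥ 1, let Π be the orthogonal projection onto the symmetric subspace of (ℂ^d)^{⊗3} (equivalently, Π = (1/6) Σ_{π ∈ S_3} W_π where W_π permutes the three tensor factors), and let T_3 denote the partial transpose on the third tensor factor with respect to the standard basis. Then the operator norm of (1 ⊗ 1 ⊗ T_3)(Π) equals (d+2)/3. Equivalently, since rank(Π) = binom(d+2, 3), the operator Q = (1/rank(Π)) (1 ⊗ 1 ⊗ T_3)(Π) satisfies ‖Q‖ = 2/(d(d+1)). -/

import Mathlib

open Matrix
open scoped Matrix.Norms.L2Operator

/-- The unitary `W_π` permuting the three tensor factors of `(ℂ^d)^{⊗3}`: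
`W_π(|x_1⟩⊗|x_2⟩⊗|x_3⟩) = |x_{π⁻¹(1)}⟩⊗|x_{π⁻¹(2)}⟩⊗|x_{π⁻¹(3)}⟩`. -/
def permOp (d : ℕ) (π : Equiv.Perm (Fin 3)) :
    Matrix (Fin 3 → Fin d) (Fin 3 → Fin d) ℂ :=
  Matrix.of fun f g => if ∀ i, f (π i) = g i then 1 else 0

/-- The orthogonal projection `Π = (1/6) ∑_{π ∈ S_3} W_π` onto the symmetric
subspace of `(ℂ^d)^{⊗3}`. -/
noncomputable def symProj3 (d : ℕ) : Matrix (Fin 3 → Fin d) (Fin 3 → Fin d) ℂ :=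
  (6 : ℂ)⁻¹ • ∑ π : Equiv.Perm (Fin 3), permOp d π

/-- The partial transpose on the third tensor factor, with respect to the
standard basis. -/
def ptransp3 {d : ℕ} (M : Matrix (Fin 3 → Fin d) (Fin 3 → Fin d) ℂ) :
    Matrix (Fin 3 → Fin d) (Fin 3 → Fin d) ℂ :=
  Matrix.of fun f g => M (Function.update f 2 (g 2)) (Function.update g 2 (f 2))

/-!
Write `F` for the flip of the first two factors and `G` for `d` times the projector onto the
maximally entangled vector of the first and third factors (tensored with the identity). The
partial transposes of the six permutation operators are `1, F, G, GF, FG, FGF`, so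
`6 (1 ⊗ 1 ⊗ T)(Π) = B := 1 + F + G + GF + FG + FGF`. The relations `F² = 1`, `G² = dG`,
`GFG = G` force `B (B - 2) (B - (2d + 4)) = 0` and `B (1 + F) G = (2d + 4) (1 + F) G`, so the
self-adjoint `B` has spectrum in `{0, 2, 2d + 4}` containing `2d + 4`, which is then its norm.
-/

open Polynomial

theorem spectrum.mem_of_mul_eq_smul {R A : Type*} [CommSemiring R] [Ring A] [Algebra R A]
    {a p : A} {μ : R} (hp : p ≠ 0) (h : a * p = μ • p) : μ ∈ spectrum R a := by
  rintro ⟨u, hu⟩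
  apply hp
  have hzero : (algebraMap R A μ - a) * p = 0 := by
    rw [sub_mul, h, Algebra.algebraMap_eq_smul_one, smul_one_mul, sub_self]
  simpa [← hu] using congrArg ((↑u⁻¹ : A) * ·) hzero

theorem spectrum.eval_eq_zero_of_aeval_eq_zero {𝕜 A : Type*} [Field 𝕜] [Ring A]
    [Algebra 𝕜 A] [Nontrivial A] {a : A} {p : 𝕜[X]} (hp : aeval a p = 0) {μ : 𝕜}
    (hμ : μ ∈ spectrum 𝕜 a) : p.eval μ = 0 := by
  simpa [hp] using spectrum.subset_polynomial_aeval a p ⟨μ, hμ, rfl⟩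

theorem IsSelfAdjoint.norm_eq_of_mem_spectrum {A : Type*} [CStarAlgebra A] {a : A}
    (ha : IsSelfAdjoint a) {μ : ℂ} (hμ : μ ∈ spectrum ℂ a)
    (hmax : ∀ ν ∈ spectrum ℂ a, ‖ν‖ ≤ ‖μ‖) : ‖a‖ = ‖μ‖ := by
  have hrad : spectralRadius ℂ a = ‖μ‖₊ :=
    le_antisymm (iSup₂_le fun ν hν => by exact_mod_cast hmax ν hν)
      (le_iSup₂ (f := fun ν _ => (‖ν‖₊ : ENNReal)) μ hμ)
  rw [← ha.toReal_spectralRadius_complex_eq_norm, hrad]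
  rfl

section BrauerRelations

variable {R A : Type*} [CommRing R] [Ring A] [Algebra R A] {F G : A} {c : R}

def brauerSum (F G : A) : A := 1 + F + G + G * F + F * G + F * G * F

theorem brauerSum_mul_eq_smul (hF : F * F = 1) (hG : G * G = c • G) (hGFG : G * F * G = G) :
    brauerSum F G * ((1 + F) * G) = (2 * c + 4) • ((1 + F) * G) := by
  have hFF (x : A) : F * (F * x) = x := by rw [← mul_assoc, hF, one_mul]
  simp only [brauerSum, mul_add, add_mul, one_mul, mul_assoc, hFF, hG, ← mul_assoc G F G, hGFG,
    mul_smul_comm]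
  module

theorem aeval_brauerSum_eq_zero (hF : F * F = 1) (hG : G * G = c • G) (hGFG : G * F * G = G) :
    aeval (brauerSum F G) (X * (X - C 2) * (X - C (2 * c + 4))) = 0 := by
  have hFF (x : A) : F * (F * x) = x := by rw [← mul_assoc, hF, one_mul]
  have hGG (x : A) : G * (G * x) = c • (G * x) := by rw [← mul_assoc, hG, smul_mul_assoc]
  have hGFG' (x : A) : G * (F * (G * x)) = G * x := by rw [← mul_assoc, ← mul_assoc, hGFG]
  simp only [map_mul, map_sub, aeval_X, aeval_C, Algebra.algebraMap_eq_smul_one]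
  simp only [brauerSum, mul_add, add_mul, mul_sub, sub_mul, one_mul, mul_one, mul_assoc, hFF,
    hGG, hGFG', hF, hG, ← mul_assoc G F G, hGFG, mul_smul_comm, smul_mul_assoc, smul_smul]
  module

theorem IsSelfAdjoint.brauerSum [StarRing A] (hF : IsSelfAdjoint F) (hG : IsSelfAdjoint G) :
    IsSelfAdjoint (brauerSum F G) := by
  simp only [IsSelfAdjoint, _root_.brauerSum, star_add, star_mul, star_one, hF.star_eq,
    hG.star_eq, mul_assoc]
  abel

end BrauerRelations

theorem norm_brauerSum {A : Type*} [CStarAlgebra A] [Nontrivial A] {F G : A} {c : ℝ}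
    (hc : 0 ≤ c) (hFsa : IsSelfAdjoint F) (hGsa : IsSelfAdjoint G) (hF : F * F = 1)
    (hG : G * G = (c : ℂ) • G) (hGFG : G * F * G = G) (hne : (1 + F) * G ≠ 0) :
    ‖brauerSum F G‖ = 2 * c + 4 := by
  have hμ := spectrum.mem_of_mul_eq_smul hne (brauerSum_mul_eq_smul hF hG hGFG)
  have hnorm : ‖2 * (c : ℂ) + 4‖ = 2 * c + 4 := by
    rw [← Complex.norm_of_nonneg (by positivity : 0 ≤ 2 * c + 4)]
    push_cast
    rfl
  rw [← hnorm]
  refine (hFsa.brauerSum hGsa).norm_eq_of_mem_spectrum hμ fun ν hν => ?_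
  have hroot := spectrum.eval_eq_zero_of_aeval_eq_zero (aeval_brauerSum_eq_zero hF hG hGFG) hν
  simp only [eval_mul, eval_sub, eval_X, eval_C, mul_eq_zero, sub_eq_zero] at hroot
  rcases hroot with (rfl | rfl) | rfl
  · simp
  · norm_num [hnorm]
    linarith
  · rfl

theorem Fintype.sum_fin_three_arrow {α M : Type*} [Fintype α] [AddCommMonoid M]
    (φ : (Fin 3 → α) → M) : ∑ h, φ h = ∑ a, ∑ b, ∑ c, φ ![a, b, c] := by
  let e : α × α × α ≃ (Fin 3 → α) :=
    { toFun := fun p => ![p.1, p.2.1, p.2.2]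
      invFun := fun h => (h 0, h 1, h 2)
      left_inv := fun _ => rfl
      right_inv := fun h => by ext i; fin_cases i <;> rfl }
  rw [← e.sum_comp, Fintype.sum_prod_type]
  simp only [Fintype.sum_prod_type]
  rfl

section TensorCube

variable {d : ℕ}

theorem permOp_apply (π : Equiv.Perm (Fin 3)) (f g : Fin 3 → Fin d) :
    permOp d π f g = if f ∘ π = g then 1 else 0 := by
  simp [permOp, funext_iff]

theorem permOp_mul_apply (π : Equiv.Perm (Fin 3))
    (M : Matrix (Fin 3 → Fin d) (Fin 3 → Fin d) ℂ) (f g : Fin 3 → Fin d) :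
    (permOp d π * M) f g = M (f ∘ π) g := by
  simp [mul_apply, permOp_apply]

theorem mul_permOp_apply (π : Equiv.Perm (Fin 3))
    (M : Matrix (Fin 3 → Fin d) (Fin 3 → Fin d) ℂ) (f g : Fin 3 → Fin d) :
    (M * permOp d π) f g = M f (g ∘ π.symm) := by
  simp [mul_apply, permOp_apply, ← Equiv.eq_comp_symm]

theorem permOp_one : permOp d 1 = 1 := by
  ext f g
  simp [permOp_apply, one_apply]

theorem permOp_mul (σ τ : Equiv.Perm (Fin 3)) :
    permOp d (σ * τ) = permOp d σ * permOp d τ := by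
  ext f g
  rw [permOp_mul_apply, permOp_apply, permOp_apply, Equiv.Perm.coe_mul]
  rfl

theorem conjTranspose_permOp (π : Equiv.Perm (Fin 3)) : (permOp d π)ᴴ = permOp d π⁻¹ := by
  ext f g
  simp [permOp_apply, apply_ite, Equiv.Perm.inv_def, Equiv.eq_comp_symm, eq_comm]

theorem isSelfAdjoint_permOp_swap (i j : Fin 3) : IsSelfAdjoint (permOp d (Equiv.swap i j)) := by
  rw [IsSelfAdjoint, star_eq_conjTranspose, conjTranspose_permOp, Equiv.swap_inv]

def contract02 (d : ℕ) : Matrix (Fin 3 → Fin d) (Fin 3 → Fin d) ℂ :=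
  of fun f g => if f 0 = f 2 ∧ g 0 = g 2 ∧ f 1 = g 1 then 1 else 0

theorem contract02_mul_apply (M : Matrix (Fin 3 → Fin d) (Fin 3 → Fin d) ℂ)
    (f g : Fin 3 → Fin d) :
    (contract02 d * M) f g = if f 0 = f 2 then ∑ a, M ![a, f 1, a] g else 0 := by
  rw [mul_apply, Fintype.sum_fin_three_arrow]
  split_ifs with h
  · refine Finset.sum_congr rfl fun a _ => ?_
    rw [Finset.sum_eq_single (f 1), Finset.sum_eq_single a] <;> simp_all [contract02, eq_comm]
  · simp [contract02, h]

theorem contract02_mul_self : contract02 d * contract02 d = (d : ℂ) • contract02 d := by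
  ext f g
  rw [contract02_mul_apply]
  split_ifs <;> simp_all [contract02]

theorem contract02_mul_permOp_mul_self :
    contract02 d * permOp d (Equiv.swap 0 1) * contract02 d = contract02 d := by
  ext f g
  rw [mul_assoc, contract02_mul_apply]
  by_cases h : f 0 = f 2
  · rw [if_pos h, Fintype.sum_eq_single (f 1) fun a ha => by
      simp [permOp_mul_apply, contract02, Ne.symm ha]]
    simp [permOp_mul_apply, contract02, h]
  · simp [contract02, h]

theorem isSelfAdjoint_contract02 : IsSelfAdjoint (contract02 d) := by
  ext f g
  simp only [star_apply, contract02, of_apply]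
  split_ifs <;> simp_all [eq_comm]

theorem ptransp3_add (M N : Matrix (Fin 3 → Fin d) (Fin 3 → Fin d) ℂ) :
    ptransp3 (M + N) = ptransp3 M + ptransp3 N := rfl

theorem ptransp3_smul (c : ℂ) (M : Matrix (Fin 3 → Fin d) (Fin 3 → Fin d) ℂ) :
    ptransp3 (c • M) = c • ptransp3 M := rfl

theorem ptransp3_one : ptransp3 (1 : Matrix (Fin 3 → Fin d) (Fin 3 → Fin d) ℂ) = 1 := by
  ext f g
  simp only [ptransp3, of_apply, one_apply, funext_iff, Fin.forall_fin_succ,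
    Function.update_apply]
  exact if_congr (by simp; tauto) rfl rfl

theorem ptransp3_permOp_mul {σ : Equiv.Perm (Fin 3)} (hσ : σ 2 = 2)
    (M : Matrix (Fin 3 → Fin d) (Fin 3 → Fin d) ℂ) :
    ptransp3 (permOp d σ * M) = permOp d σ * ptransp3 M := by
  have hσ' : σ.symm 2 = 2 := by rw [Equiv.symm_apply_eq, hσ]
  ext f g
  simp [ptransp3, permOp_mul_apply, Function.update_comp_equiv, hσ, hσ']

theorem ptransp3_mul_permOp {σ : Equiv.Perm (Fin 3)} (hσ : σ 2 = 2)
    (M : Matrix (Fin 3 → Fin d) (Fin 3 → Fin d) ℂ) :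
    ptransp3 (M * permOp d σ) = ptransp3 M * permOp d σ := by
  have hσ' : σ.symm 2 = 2 := by rw [Equiv.symm_apply_eq, hσ]
  ext f g
  simp [ptransp3, mul_permOp_apply, Function.update_comp_equiv, hσ, hσ']

theorem ptransp3_permOp_swap02 : ptransp3 (permOp d (Equiv.swap 0 2)) = contract02 d := by
  ext f g
  simp only [ptransp3, permOp_apply, contract02, of_apply, funext_iff, Fin.forall_fin_succ,
    Function.update_apply]
  exact if_congr (by simp [Equiv.swap_apply_def]; tauto) rfl rfl

theorem sum_permOp :
    ∑ π, permOp d π = 1 + permOp d (Equiv.swap 0 1) + permOp d (Equiv.swap 0 2)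
      + permOp d (Equiv.swap 0 2) * permOp d (Equiv.swap 0 1)
      + permOp d (Equiv.swap 0 1) * permOp d (Equiv.swap 0 2)
      + permOp d (Equiv.swap 0 1) * permOp d (Equiv.swap 0 2) * permOp d (Equiv.swap 0 1) := by
  have huniv : (Finset.univ : Finset (Equiv.Perm (Fin 3))) =
      {1, Equiv.swap 0 1, Equiv.swap 0 2, Equiv.swap 0 2 * Equiv.swap 0 1,
        Equiv.swap 0 1 * Equiv.swap 0 2, Equiv.swap 0 1 * Equiv.swap 0 2 * Equiv.swap 0 1} := by
    decide
  rw [huniv, Finset.sum_insert (by decide), Finset.sum_insert (by decide),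
    Finset.sum_insert (by decide), Finset.sum_insert (by decide), Finset.sum_insert (by decide),
    Finset.sum_singleton, permOp_one, permOp_mul, permOp_mul, permOp_mul, permOp_mul]
  abel

theorem ptransp3_symProj3 :
    ptransp3 (symProj3 d) =
      (6 : ℂ)⁻¹ • brauerSum (permOp d (Equiv.swap 0 1)) (contract02 d) := by
  have h01 : Equiv.swap (0 : Fin 3) 1 2 = 2 := by decide
  have hF : ptransp3 (permOp d (Equiv.swap 0 1)) = permOp d (Equiv.swap 0 1) := by
    rw [← mul_one (permOp d _), ptransp3_permOp_mul h01, ptransp3_one]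
  rw [symProj3, ptransp3_smul, sum_permOp]
  simp only [ptransp3_add, ptransp3_one, hF, ptransp3_permOp_mul h01, ptransp3_mul_permOp h01,
    ptransp3_permOp_swap02, brauerSum]

end TensorCube

theorem Nat.cast_add_two_choose_three (n : ℕ) :
    ((n + 2).choose 3 : ℝ) = ((n : ℝ) + 2) * ((n : ℝ) + 1) * n / 6 := by
  have h := Nat.descFactorial_eq_factorial_mul_choose (n + 2) 3
  simp only [descFactorial, add_tsub_cancel_right, Nat.add_one_sub_one, tsub_zero, mul_one,
    factorial, succ_eq_add_one, reduceAdd, zero_add, reduceMul] at h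
  rw [eq_div_iff (by norm_num)]
  norm_cast
  linarith

/-- The partial transpose (on the third factor) of the projection onto the symmetric
subspace of `(ℂ^d)^{⊗3}` has operator norm `(d+2)/3`; equivalently, since
`rank Π = C(d+2,3)`, the operator `Q = (1/rank Π)(1⊗1⊗T)(Π)` satisfies
`‖Q‖ = 2/(d(d+1))`. -/
theorem ptranspose_symProj_norm (d : ℕ) (hd : 1 ≤ d) :
    ‖ptransp3 (symProj3 d)‖ = ((d : ℝ) + 2) / 3 ∧
    ‖((Nat.choose (d + 2) 3 : ℂ))⁻¹ • ptransp3 (symProj3 d)‖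
      = 2 / ((d : ℝ) * ((d : ℝ) + 1)) := by
  have : Nonempty (Fin 3 → Fin d) := ⟨fun _ => ⟨0, hd⟩⟩
  set F := permOp d (Equiv.swap 0 1)
  set G := contract02 d
  have hF : F * F = 1 := by rw [← permOp_mul, Equiv.swap_mul_self, permOp_one]
  have hG : G * G = ((d : ℝ) : ℂ) • G := by rw [Complex.ofReal_natCast, contract02_mul_self]
  have hne : (1 + F) * G ≠ 0 := fun h => by
    have hx := congrFun (congrFun h fun _ => ⟨0, hd⟩) fun _ => ⟨0, hd⟩
    norm_num [add_mul, F, G, permOp_mul_apply, contract02] at hx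
  have hB : ‖brauerSum F G‖ = 2 * d + 4 :=
    norm_brauerSum d.cast_nonneg (isSelfAdjoint_permOp_swap 0 1) isSelfAdjoint_contract02 hF hG
      contract02_mul_permOp_mul_self hne
  have hnorm : ‖ptransp3 (symProj3 d)‖ = ((d : ℝ) + 2) / 3 := by
    rw [ptransp3_symProj3, norm_smul, hB]
    norm_num
    ring
  refine ⟨hnorm, ?_⟩
  rw [norm_smul, hnorm, norm_inv, Complex.norm_natCast, Nat.cast_add_two_choose_three]
  field_simp
  ring
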